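/- arXiv:2205.01157 — 2 statements merged into one kernel-verified Lean document; each statement's English description precedes it below -/
import Mathlib

section
/- Let S be a finite set of solutions, G a set of m groups, u : S × G → ℝ, and ε ≥ 0. A solution s ∈ S is ε-tradeoff approximate leximax if and only if s is ε-recursively approximate leximax. (ε-tradeoff: for any s' ∈ S and i with u(s',[i]) > u(s,[i]) + ε, there exists j < i with u(s,[j]) > u(s',[j]). ε-recursive: there exists α ∈ [0,ε]^m such that s ∈ S_m^α, where S_0^α = S and S_i^α = { t ∈ S_{i-1}^α : u(t,[i]) ≥ max_{t' ∈ S_{i-1}^α} u(t',[i]) − α_i }.) -/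
open scoped Classical

/-- The vector of the values of `w` sorted in nondecreasing order;
`sortedVec m w i` is the `i`-th smallest value of `w`. -/
noncomputable def sortedVec (m : ℕ) (w : Fin m → ℝ) : Fin m → ℝ :=
  fun i => ((Finset.univ.val.map w).sort (· ≤ ·)).get ⟨i.1, by simp⟩

/-- Lexicographic order on `ℝ^m`: `lexLE m v u` means `v ⪯ u`, i.e. either `v = u`
or at the first coordinate where they differ, `u` is strictly larger. -/
def lexLE (m : ℕ) (v u : Fin m → ℝ) : Prop :=
  v = u ∨ ∃ i : Fin m, (∀ j < i, v j = u j) ∧ v i < u i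

/-- The recursively defined sets `S_i^α`: `S_0^α = S` and `S_i^α` keeps those solutions of
`S_{i-1}^α` whose `i`-th smallest group utility is within `α_i` of the maximum `i`-th smallest
group utility over `S_{i-1}^α` (expressed as: at least every other value minus `α_i`). -/
noncomputable def recSets {σ : Type*} (m : ℕ) (S : Finset σ)
    (u : σ → Fin m → ℝ) (α : Fin m → ℝ) : ℕ → Finset σ
  | 0 => S
  | (i+1) =>
    if h : i < m then
      (recSets m S u α i).filter (fun s => ∀ t ∈ recSets m S u α i,
        sortedVec m (u s) ⟨i, h⟩ ≥ sortedVec m (u t) ⟨i, h⟩ - α ⟨i, h⟩)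
    else recSets m S u α i

section Aux

variable {σ : Type*}

/-- The greedy choice of the slack at step `k`, given the surviving set `T`. -/
noncomputable def stepA (m : ℕ) (u : σ → Fin m → ℝ) (s : σ) (T : Finset σ) (k : ℕ) : ℝ :=
  if h : T.Nonempty ∧ k < m then
    max 0 (T.sup' h.1 (fun t => sortedVec m (u t) ⟨k, h.2⟩) - sortedVec m (u s) ⟨k, h.2⟩)
  else 0

lemma stepA_nonneg (m : ℕ) (u : σ → Fin m → ℝ) (s : σ) (T : Finset σ) (k : ℕ) :
    0 ≤ stepA m u s T k := by
  unfold stepA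
  split
  · exact le_max_left _ _
  · exact le_refl 0

lemma stepA_eq (m : ℕ) (u : σ → Fin m → ℝ) (s : σ) (T : Finset σ) (k : ℕ)
    (hne : T.Nonempty) (hk : k < m) :
    stepA m u s T k =
      max 0 (T.sup' hne (fun t => sortedVec m (u t) ⟨k, hk⟩) - sortedVec m (u s) ⟨k, hk⟩) := by
  rw [stepA, dif_pos (show T.Nonempty ∧ k < m from ⟨hne, hk⟩)]

/-- The greedily constructed sequence of surviving sets. -/
noncomputable def auxT (m : ℕ) (S : Finset σ) (u : σ → Fin m → ℝ) (s : σ) : ℕ → Finset σ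
  | 0 => S
  | (k+1) =>
    if h : k < m then
      (auxT m S u s k).filter (fun x => ∀ t ∈ auxT m S u s k,
        sortedVec m (u x) ⟨k, h⟩ ≥ sortedVec m (u t) ⟨k, h⟩ - stepA m u s (auxT m S u s k) k)
    else auxT m S u s k

lemma s_mem_auxT (m : ℕ) (S : Finset σ) (u : σ → Fin m → ℝ) (s : σ) (hs : s ∈ S) :
    ∀ k, s ∈ auxT m S u s k := by
  intro k
  induction k with
  | zero => exact hs
  | succ k ih =>
    rw [auxT]
    split
    next h =>
      rw [Finset.mem_filter]
      refine ⟨ih, fun t ht => ?_⟩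
      have hne : (auxT m S u s k).Nonempty := ⟨s, ih⟩
      rw [stepA_eq m u s _ k hne h]
      have h1 : sortedVec m (u t) ⟨k, h⟩ ≤
          (auxT m S u s k).sup' hne (fun t => sortedVec m (u t) ⟨k, h⟩) :=
        Finset.le_sup' (fun t => sortedVec m (u t) ⟨k, h⟩) ht
      have h2 := le_max_right (0:ℝ)
        ((auxT m S u s k).sup' hne (fun t => sortedVec m (u t) ⟨k, h⟩) - sortedVec m (u s) ⟨k, h⟩)
      linarith
    next => exact ih

lemma auxT_subset_S (m : ℕ) (S : Finset σ) (u : σ → Fin m → ℝ) (s : σ) :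
    ∀ k, auxT m S u s k ⊆ S := by
  intro k
  induction k with
  | zero => exact subset_rfl
  | succ k ih =>
    rw [auxT]
    split
    · exact (Finset.filter_subset _ _).trans ih
    · exact ih

lemma auxT_ge (m : ℕ) (S : Finset σ) (u : σ → Fin m → ℝ) (s : σ) (hs : s ∈ S) :
    ∀ k, ∀ t ∈ auxT m S u s k, ∀ j, j < k → ∀ (hjm : j < m),
      sortedVec m (u s) ⟨j, hjm⟩ ≤ sortedVec m (u t) ⟨j, hjm⟩ := by
  intro k
  induction k with
  | zero => intro t _ j hj _; omega
  | succ k ih =>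
    intro t ht j hj hjm
    rw [auxT] at ht
    by_cases h : k < m
    · rw [dif_pos h, Finset.mem_filter] at ht
      rcases Nat.lt_or_ge j k with hjk | hjk
      · exact ih t ht.1 j hjk hjm
      · have hjeq : j = k := by omega
        subst hjeq
        have hsk := s_mem_auxT m S u s hs j
        have hne : (auxT m S u s j).Nonempty := ⟨s, hsk⟩
        obtain ⟨t', ht', hMt'⟩ :=
          Finset.exists_mem_eq_sup' hne (fun t => sortedVec m (u t) ⟨j, h⟩)
        have h1 := ht.2 t' ht'
        have hMs : sortedVec m (u s) ⟨j, h⟩ ≤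
            (auxT m S u s j).sup' hne (fun t => sortedVec m (u t) ⟨j, h⟩) :=
          Finset.le_sup' (fun t => sortedVec m (u t) ⟨j, h⟩) hsk
        have hA := stepA_eq m u s (auxT m S u s j) j hne h
        have hmax : stepA m u s (auxT m S u s j) j =
            (auxT m S u s j).sup' hne (fun t => sortedVec m (u t) ⟨j, h⟩)
              - sortedVec m (u s) ⟨j, h⟩ := by
          rw [hA, max_eq_right (by linarith)]
        have : sortedVec m (u t) ⟨j, h⟩ ≥ sortedVec m (u s) ⟨j, h⟩ := by
          rw [hmax] at h1
          rw [hMt'] at h1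
          linarith
        exact this
    · rw [dif_neg h] at ht
      exact ih t ht j (by omega) hjm

lemma recSets_eq_auxT (m : ℕ) (S : Finset σ) (u : σ → Fin m → ℝ) (s : σ) (hs : s ∈ S) :
    ∀ k, recSets m S u (fun i => stepA m u s (auxT m S u s i.1) i.1) k = auxT m S u s k := by
  intro k
  induction k with
  | zero => rfl
  | succ k ih =>
    rw [recSets, auxT]
    by_cases h : k < m
    · rw [dif_pos h, dif_pos h, ih]
    · rw [dif_neg h, dif_neg h, ih]

lemma recSets_succ_subset (m : ℕ) (S : Finset σ) (u : σ → Fin m → ℝ) (α : Fin m → ℝ) (k : ℕ) :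
    recSets m S u α (k+1) ⊆ recSets m S u α k := by
  rw [recSets]
  split
  · exact Finset.filter_subset _ _
  · exact subset_rfl

lemma recSets_subset (m : ℕ) (S : Finset σ) (u : σ → Fin m → ℝ) (α : Fin m → ℝ) :
    ∀ a b : ℕ, a ≤ b → recSets m S u α b ⊆ recSets m S u α a := by
  intro a b
  induction b with
  | zero => intro hab; have : a = 0 := by omega
            subst this; exact subset_rfl
  | succ b ih =>
    intro hab
    rcases Nat.eq_or_lt_of_le hab with heq | hlt
    · subst heq; exact subset_rfl
    · exact (recSets_succ_subset m S u α b).trans (ih (by omega))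

end Aux

/-- Theorem 8: `s` is an ε-tradeoff approximate leximax solution iff `s` is an
ε-recursively approximate leximax solution. -/
theorem tradeoff_iff_recursive {σ : Type*} (S : Finset σ) (hS : S.Nonempty) (m : ℕ)
    (u : σ → Fin m → ℝ) (ε : ℝ) (hε : 0 ≤ ε) (s : σ) (hs : s ∈ S) :
    (∀ s' ∈ S, ∀ i : Fin m, sortedVec m (u s') i > sortedVec m (u s) i + ε →
      ∃ j < i, sortedVec m (u s) j > sortedVec m (u s') j) ↔
    (∃ α : Fin m → ℝ, (∀ i, α i ∈ Set.Icc 0 ε) ∧ s ∈ recSets m S u α m) := by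
  constructor
  · intro htrade
    refine ⟨fun i => stepA m u s (auxT m S u s i.1) i.1, fun i => ?_, ?_⟩
    · refine ⟨stepA_nonneg m u s _ _, ?_⟩
      have hski := s_mem_auxT m S u s hs i.1
      have hne : (auxT m S u s i.1).Nonempty := ⟨s, hski⟩
      show stepA m u s (auxT m S u s i.1) i.1 ≤ ε
      rw [stepA_eq m u s _ i.1 hne i.2]
      apply max_le hε
      rw [sub_le_iff_le_add]
      apply Finset.sup'_le
      intro t ht
      by_contra hcon
      push_neg at hcon
      have hi : (⟨i.1, i.2⟩ : Fin m) = i := rfl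
      rw [hi] at hcon
      have htS : t ∈ S := auxT_subset_S m S u s i.1 ht
      obtain ⟨j, hj, hjs⟩ := htrade t htS i (by linarith)
      have hge := auxT_ge m S u s hs i.1 t ht j.1 hj j.2
      have hjeq : (⟨j.1, j.2⟩ : Fin m) = j := rfl
      rw [hjeq] at hge
      linarith
    · rw [recSets_eq_auxT m S u s hs m]
      exact s_mem_auxT m S u s hs m
  · rintro ⟨α, hα, hmem⟩
    intro s' hs' i hgt
    by_contra hcon
    push_neg at hcon
    have hsk : ∀ k, k ≤ m → s ∈ recSets m S u α k :=
      fun k hk => recSets_subset m S u α k m hk hmem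
    have hstep : ∀ k (hk : k < m), ∀ x ∈ recSets m S u α (k+1), ∀ t ∈ recSets m S u α k,
        sortedVec m (u x) ⟨k, hk⟩ ≥ sortedVec m (u t) ⟨k, hk⟩ - α ⟨k, hk⟩ := by
      intro k hk x hx t ht
      rw [recSets, dif_pos hk, Finset.mem_filter] at hx
      exact hx.2 t ht
    have hclaim : ∀ k, k ≤ i.1 → s' ∈ recSets m S u α k := by
      intro k
      induction k with
      | zero => intro _; exact hs'
      | succ k ih =>
        intro hki
        have hk : k < m := by have := i.2; omega
        rw [recSets, dif_pos hk, Finset.mem_filter]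
        refine ⟨ih (by omega), fun t ht => ?_⟩
        have h1 := hstep k hk s (hsk (k+1) (by omega)) t ht
        have h2 := hcon ⟨k, hk⟩ (by exact hki)
        linarith
    have hsi' := hclaim i.1 le_rfl
    have hfin := hstep i.1 i.2 s (hsk (i.1+1) i.2) s' hsi'
    have hieq : (⟨i.1, i.2⟩ : Fin m) = i := rfl
    rw [hieq] at hfin
    have hαi := (hα i).2
    linarith
end

section
/- There exists a finite instance (a set of solutions, groups, and utilities) and ε > 0 such that no solution is (ε, ε)-significant tradeoff leximax. Concretely, with two groups and four solutions with utilities u(S_i, G_1) = (0, ε/2, ε, 3ε/2) and u(S_i, G_2) = (1/2 + 6ε, 1/2 + 4ε, 1/2 + 2ε, 1/2) for i = 1,...,4 and ε = 1/100, no solution S satisfies: for all S' and all i ∈ {1,2} with u(S',[i]) > u(S,[i]) + ε, there exists j < i with u(S,[j]) > u(S',[j]) + ε. -/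
open scoped Classical

/-- The concrete instance of Example 5: two groups, four solutions, ε = 1/100. -/
noncomputable def exU : Fin 4 → Fin 2 → ℝ :=
  ![![0, 1/2 + 6 * (1/100 : ℝ)],
    ![(1/100 : ℝ)/2, 1/2 + 4 * (1/100 : ℝ)],
    ![(1/100 : ℝ), 1/2 + 2 * (1/100 : ℝ)],
    ![3 * (1/100 : ℝ)/2, 1/2]]

lemma sv2 (a b : ℝ) (h : a ≤ b) :
    sortedVec 2 ![a,b] 0 = a ∧ sortedVec 2 ![a,b] 1 = b := by
  have : ([a,b].mergeSort fun x1 x2 => decide (x1 ≤ x2)) = [a,b] := by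
    apply List.mergeSort_eq_self
    simp [h]
  constructor <;> simp [sortedVec, this]

lemma ev0 : sortedVec 2 (exU 0) 0 = 0 ∧ sortedVec 2 (exU 0) 1 = 1/2 + 6 * (1/100) := by
  have := sv2 0 (1/2 + 6 * (1/100)) (by norm_num)
  simpa [exU] using this

lemma ev1 : sortedVec 2 (exU 1) 0 = (1/100)/2 ∧ sortedVec 2 (exU 1) 1 = 1/2 + 4 * (1/100) := by
  have := sv2 ((1/100)/2) (1/2 + 4 * (1/100)) (by norm_num)
  simpa [exU] using this

lemma ev2 : sortedVec 2 (exU 2) 0 = (1/100) ∧ sortedVec 2 (exU 2) 1 = 1/2 + 2 * (1/100) := by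
  have := sv2 (1/100) (1/2 + 2 * (1/100)) (by norm_num)
  simpa [exU] using this

lemma ev3 : sortedVec 2 (exU 3) 0 = 3 * (1/100)/2 ∧ sortedVec 2 (exU 3) 1 = 1/2 := by
  have := sv2 (3 * (1/100)/2) (1/2) (by norm_num)
  simpa [exU] using this

/-- Example 5: in the above instance no solution is (ε, ε)-significant tradeoff leximax
for ε = 1/100. -/
theorem sig_tradeoff_nonexistence :
    ¬ ∃ s : Fin 4, ∀ s' : Fin 4, ∀ i : Fin 2,
      sortedVec 2 (exU s') i > sortedVec 2 (exU s) i + (1/100 : ℝ) →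
      ∃ j < i, sortedVec 2 (exU s) j > sortedVec 2 (exU s') j + (1/100 : ℝ) := by
  rintro ⟨s, hs⟩
  have h4 : s = 0 ∨ s = 1 ∨ s = 2 ∨ s = 3 := by omega
  rcases h4 with rfl | rfl | rfl | rfl
  · obtain ⟨j, hj, -⟩ := hs 3 0 (by rw [ev3.1, ev0.1]; norm_num)
    exact absurd hj (by simp [Fin.lt_def])
  · obtain ⟨j, hj, hgt⟩ := hs 0 1 (by rw [ev0.2, ev1.2]; norm_num)
    have : j = 0 := by omega
    subst this
    rw [ev1.1, ev0.1] at hgt; norm_num at hgt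
  · obtain ⟨j, hj, hgt⟩ := hs 1 1 (by rw [ev1.2, ev2.2]; norm_num)
    have : j = 0 := by omega
    subst this
    rw [ev2.1, ev1.1] at hgt; norm_num at hgt
  · obtain ⟨j, hj, hgt⟩ := hs 2 1 (by rw [ev2.2, ev3.2]; norm_num)
    have : j = 0 := by omega
    subst this
    rw [ev3.1, ev2.1] at hgt; norm_num at hgt
end
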